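/- If μ < λ ≤ 2^μ are infinite cardinals, then there exists a subset A of the space 2^λ (with the product topology of the discrete two-point space) such that |A| ≤ μ and A is dense in 2^λ. -/

import Mathlib

universe u

open Cardinal Set Function

/-! Embed `λ` into `2 ^ μ` by an injection `e`. Finitely many points of `λ` are already
separated by finitely many coordinates `S` of `2 ^ μ`, so any prescribed pattern on them is
the restriction of a map `i ↦ g (e i ↾ S)`. There are only `μ` pairs `(S, g)` with `S` a finite
subset of `μ` and `g : 2 ^ S → 2`, and the maps they define are dense in `2 ^ λ`. -/

section

variable {ι M β X : Type*}

def compRestrict (e : ι → M → β) (Sg : Σ S : Finset M, (S → β) → X) : ι → X :=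
  fun i => Sg.2 (Sg.1.restrict (e i))

theorem exists_finset_injOn_restrict (e : ι → M → β) (he : Injective e) (I : Finset ι) :
    ∃ S : Finset M, InjOn (fun i => S.restrict (e i)) I := by
  classical
  have hsep : ∀ p ∈ I.offDiag, ∃ m, e p.1 m ≠ e p.2 m := fun p hp =>
    ne_iff.mp (he.ne (Finset.mem_offDiag.mp hp).2.2)
  choose sep hsep using hsep
  refine ⟨I.offDiag.attach.image fun p => sep p.1 p.2, fun i hi j hj hij => ?_⟩
  by_contra hne
  have hij_mem : (i, j) ∈ I.offDiag := Finset.mem_offDiag.mpr ⟨hi, hj, hne⟩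
  exact hsep _ hij_mem <| congrFun hij
    ⟨_, Finset.mem_image.mpr ⟨⟨_, hij_mem⟩, Finset.mem_attach _ _, rfl⟩⟩

theorem dense_range_compRestrict [TopologicalSpace X] [Nonempty X] (e : ι → M → β)
    (he : Injective e) : Dense (range (compRestrict (X := X) e)) := by
  rw [dense_iff_inter_open]
  rintro U hU ⟨x, hx⟩
  obtain ⟨I, u, hu, hsub⟩ := isOpen_pi_iff.mp hU x hx
  obtain ⟨S, hS⟩ := exists_finset_injOn_restrict e he I
  let r : I → S → β := fun i => S.restrict (e i)
  have hr : Injective r := fun i j h => Subtype.ext (hS i.2 j.2 h)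
  let g : (S → β) → X := extend r (fun i => x i) fun _ => Classical.arbitrary X
  refine ⟨compRestrict e ⟨S, g⟩, hsub fun i hi => ?_, mem_range_self _⟩
  change g (r ⟨i, hi⟩) ∈ u i
  rw [show g (r ⟨i, hi⟩) = x i from hr.extend_apply _ _ _]
  exact (hu i hi).2

end

theorem mk_sigma_finset_le_of_finite {M : Type u} [Infinite M] (F : Finset M → Type u)
    [∀ S, Finite (F S)] : #(Σ S, F S) ≤ #M :=
  calc #(Σ S, F S) = sum fun S => #(F S) := mk_sigma _
    _ ≤ sum fun _ : Finset M => ℵ₀ := sum_le_sum _ _ fun _ => (lt_aleph0_of_finite _).le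
    _ = #M := by rw [sum_const', mk_finset_of_infinite, mul_aleph0_eq (aleph0_le_mk M)]

theorem dense_subset_of_cantor_cube_general (μ lam : Cardinal.{u}) (hμ : Cardinal.aleph0 ≤ μ)
    (h2 : lam ≤ 2 ^ μ) :
    ∃ A : Set (lam.out → Bool), Dense A ∧ Cardinal.mk A ≤ μ := by
  have : Infinite μ.out := infinite_iff.mpr (by rwa [mk_out])
  obtain ⟨e⟩ : Nonempty (lam.out ↪ (μ.out → Bool)) := by
    rw [← le_def]
    simpa [mk_out] using h2
  refine ⟨range (compRestrict e), dense_range_compRestrict e e.injective, ?_⟩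
  calc #(range (compRestrict (X := Bool) e))
      _ ≤ #(Σ S : Finset μ.out, (S → Bool) → Bool) := mk_range_le
      _ ≤ #μ.out := mk_sigma_finset_le_of_finite _
      _ = μ := mk_out μ

/-- If `μ < λ ≤ 2 ^ μ` are infinite cardinals, then the space `2 ^ λ` of functions
from `λ` to the discrete two-point space `Bool`, with the product (Tychonoff)
topology, has a dense subset of cardinality at most `μ`. -/
theorem dense_subset_of_cantor_cube (μ lam : Cardinal.{u}) (hμ : Cardinal.aleph0 ≤ μ)
    (h1 : μ < lam) (h2 : lam ≤ 2 ^ μ) :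
    ∃ A : Set (lam.out → Bool), Dense A ∧ Cardinal.mk A ≤ μ :=
  dense_subset_of_cantor_cube_general μ lam hμ h2
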